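/- Let m = 2, U = {(1,2)}, θ ∈ ℝ, and let p(x₁, x₂|θ) = det D²ψ(x₁, x₂|θ) where ψ(x|θ) = (x₁² + x₂²)/2 − (θ/π²) cos(πx₁)cos(2πx₂). Then for every x₁ ∈ [0,1], ∫_0^1 x₂ p(x₁, x₂|θ) dx₂ = (1/2) ∫_0^1 p(x₁, x₂|θ) dx₂ = (1/2)(1 + 2θ² cos(2πx₁)). In particular, the conditional mean of X₂ given X₁ = x₁ is exactly 1/2 for all x₁. -/

import Mathlib

open Real intervalIntegral

/-- The potential ψ(x|θ) of SGM with m = 2 and U = {(1,2)}. -/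
noncomputable def heteroPotential (θ : ℝ) (x : Fin 2 → ℝ) : ℝ :=
  (x 0 ^ 2 + x 1 ^ 2) / 2 -
    (θ / Real.pi ^ 2) * Real.cos (Real.pi * x 0) * Real.cos (2 * Real.pi * x 1)

/-- The Hessian matrix D²f(x). -/
noncomputable def hessian2 (f : (Fin 2 → ℝ) → ℝ) (x : Fin 2 → ℝ) :
    Matrix (Fin 2) (Fin 2) ℝ :=
  Matrix.of fun i j => fderiv ℝ (fun y => fderiv ℝ f y (Pi.single j 1)) x (Pi.single i 1)

/-- The density p(x₁,x₂|θ) = det D²ψ(x₁,x₂|θ) of SGM with m = 2, U = {(1,2)}. -/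
noncomputable def heteroDensity (θ x₁ x₂ : ℝ) : ℝ :=
  (hessian2 (heteroPotential θ) ![x₁, x₂]).det

/-! The potential has the separable shape `a x₀ + b x₁ + u x₀ * w x₁`, whose Hessian is explicit;
its determinant is `p = 1 + 2θ² cos 2πx₁ + 5θ cos πx₁ cos 2πx₂ + 2θ² cos 4πx₂`, and integrating over
`x₂ ∈ [0, 1]` kills both oscillating terms. The conditional mean is `1/2` because `p x₁` is invariant
under `x₂ ↦ 1 - x₂`, and any `f` with `f (a + b - x) = f x` satisfies
`∫ x in a..b, x * f x = (a + b) / 2 * ∫ x in a..b, f x`. -/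

open ContinuousLinearMap in
theorem hasFDerivAt_separable {a b u w : ℝ → ℝ} {a' b' u' w' : ℝ} {y : Fin 2 → ℝ}
    (ha : HasDerivAt a a' (y 0)) (hb : HasDerivAt b b' (y 1))
    (hu : HasDerivAt u u' (y 0)) (hw : HasDerivAt w w' (y 1)) :
    HasFDerivAt (fun x : Fin 2 → ℝ => a (x 0) + b (x 1) + u (x 0) * w (x 1))
      ((a' + u' * w (y 1)) • proj (R := ℝ) (φ := fun _ : Fin 2 => ℝ) 0 +
        (b' + u (y 0) * w') • proj 1) y := by
  have h0 := hasFDerivAt_apply (𝕜 := ℝ) (0 : Fin 2) y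
  have h1 := hasFDerivAt_apply (𝕜 := ℝ) (1 : Fin 2) y
  refine (((ha.comp_hasFDerivAt y h0).add (hb.comp_hasFDerivAt y h1)).add
    ((hu.comp_hasFDerivAt y h0).mul (hw.comp_hasFDerivAt y h1))).congr_fderiv ?_
  ext v
  simp only [add_apply, smul_apply, proj_apply, smul_eq_mul, Function.comp_apply]
  ring

theorem fderiv_separable_apply {a b u w : ℝ → ℝ} {a' b' u' w' : ℝ} {y : Fin 2 → ℝ}
    (ha : HasDerivAt a a' (y 0)) (hb : HasDerivAt b b' (y 1))
    (hu : HasDerivAt u u' (y 0)) (hw : HasDerivAt w w' (y 1)) (v : Fin 2 → ℝ) :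
    fderiv ℝ (fun x : Fin 2 → ℝ => a (x 0) + b (x 1) + u (x 0) * w (x 1)) y v
      = (a' + u' * w (y 1)) * v 0 + (b' + u (y 0) * w') * v 1 := by
  simp [(hasFDerivAt_separable ha hb hu hw).fderiv]

theorem hessian2_separable {a b u w a' b' u' w' a'' b'' u'' w'' : ℝ → ℝ}
    (ha : ∀ t, HasDerivAt a (a' t) t) (ha' : ∀ t, HasDerivAt a' (a'' t) t)
    (hb : ∀ t, HasDerivAt b (b' t) t) (hb' : ∀ t, HasDerivAt b' (b'' t) t)
    (hu : ∀ t, HasDerivAt u (u' t) t) (hu' : ∀ t, HasDerivAt u' (u'' t) t)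
    (hw : ∀ t, HasDerivAt w (w' t) t) (hw' : ∀ t, HasDerivAt w' (w'' t) t) (x : Fin 2 → ℝ) :
    hessian2 (fun x => a (x 0) + b (x 1) + u (x 0) * w (x 1)) x =
      !![a'' (x 0) + u'' (x 0) * w (x 1), u' (x 0) * w' (x 1);
        u' (x 0) * w' (x 1), b'' (x 1) + u (x 0) * w'' (x 1)] := by
  -- The first partials are again of the separable shape, with `b` resp. `a` replaced by `0`.
  have hpartial₀ : (fun y => fderiv ℝ (fun x : Fin 2 → ℝ => a (x 0) + b (x 1) + u (x 0) * w (x 1)) y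
      (Pi.single 0 1)) = fun y => a' (y 0) + (fun _ => (0 : ℝ)) (y 1) + u' (y 0) * w (y 1) := by
    ext y
    simp [fderiv_separable_apply (ha _) (hb _) (hu _) (hw _)]
  have hpartial₁ : (fun y => fderiv ℝ (fun x : Fin 2 → ℝ => a (x 0) + b (x 1) + u (x 0) * w (x 1)) y
      (Pi.single 1 1)) = fun y => (fun _ => (0 : ℝ)) (y 0) + b' (y 1) + u (y 0) * w' (y 1) := by
    ext y
    simp [fderiv_separable_apply (ha _) (hb _) (hu _) (hw _)]
  ext i j
  revert i j
  simp only [Fin.forall_fin_two, hessian2, Matrix.of_apply]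
  refine ⟨⟨?_, ?_⟩, ?_, ?_⟩
  all_goals first
    | rw [hpartial₀, fderiv_separable_apply (ha' _) (hasDerivAt_const _ 0) (hu' _) (hw _)]
    | rw [hpartial₁, fderiv_separable_apply (hasDerivAt_const _ 0) (hb' _) (hu _) (hw' _)]
  all_goals simp

theorem hasDerivAt_const_mul_cos_mul (c k t : ℝ) :
    HasDerivAt (fun t => c * cos (k * t)) (-(c * k) * sin (k * t)) t := by
  simpa [mul_comm, mul_left_comm, mul_assoc] using
    (((hasDerivAt_id t).const_mul k).cos).const_mul c

theorem hasDerivAt_const_mul_sin_mul (c k t : ℝ) :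
    HasDerivAt (fun t => c * sin (k * t)) (c * k * cos (k * t)) t := by
  simpa [mul_comm, mul_left_comm, mul_assoc] using
    (((hasDerivAt_id t).const_mul k).sin).const_mul c

theorem integral_mul_eq_midpoint_mul_integral {f : ℝ → ℝ} {a b : ℝ}
    (hf : IntervalIntegrable f MeasureTheory.volume a b) (hsymm : ∀ x, f (a + b - x) = f x) :
    ∫ x in a..b, x * f x = (a + b) / 2 * ∫ x in a..b, f x := by
  have hxf : IntervalIntegrable (fun x => x * f x) MeasureTheory.volume a b :=
    hf.continuousOn_mul continuousOn_id
  have hreflect : ∫ x in a..b, x * f x = ∫ x in a..b, (a + b - x) * f x := by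
    simpa [hsymm] using (integral_comp_sub_left (a := a) (b := b) (fun x => x * f x) (a + b)).symm
  simp only [sub_mul] at hreflect
  have hsplit := integral_sub (hf.const_mul (a + b)) hxf
  rw [integral_const_mul] at hsplit
  linarith

theorem heteroDensity_eq (θ x₁ x₂ : ℝ) :
    heteroDensity θ x₁ x₂ =
      (1 + θ * cos (π * x₁) * cos (2 * π * x₂)) * (1 + 4 * θ * cos (π * x₁) * cos (2 * π * x₂)) -
        4 * θ ^ 2 * sin (π * x₁) ^ 2 * sin (2 * π * x₂) ^ 2 := by
  have hsq (t : ℝ) : HasDerivAt (fun t => t ^ 2 / 2) t t := by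
    simpa using (hasDerivAt_pow 2 t).div_const 2
  have hid (t : ℝ) : HasDerivAt (fun t => t) 1 t := hasDerivAt_id' t
  have hw (t : ℝ) : HasDerivAt (fun t => cos (2 * π * t)) (-(2 * π) * sin (2 * π * t)) t := by
    simpa using hasDerivAt_const_mul_cos_mul 1 (2 * π) t
  have hψ : heteroPotential θ = fun x =>
      x 0 ^ 2 / 2 + x 1 ^ 2 / 2 + -(θ / π ^ 2) * cos (π * x 0) * cos (2 * π * x 1) := by
    ext x
    rw [heteroPotential]
    ring
  rw [heteroDensity, hψ, hessian2_separable hsq hid hsq hid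
    (hasDerivAt_const_mul_cos_mul _ _) (hasDerivAt_const_mul_sin_mul _ _) hw
    (hasDerivAt_const_mul_sin_mul _ _), Matrix.det_fin_two_of]
  simp only [Matrix.cons_val_zero, Matrix.cons_val_one]
  field_simp
  ring

theorem heteroDensity_eq_fourier (θ x₁ x₂ : ℝ) :
    heteroDensity θ x₁ x₂ =
      1 + 2 * θ ^ 2 * cos (2 * π * x₁) + 5 * θ * cos (π * x₁) * cos (2 * π * x₂) +
        2 * θ ^ 2 * cos (4 * π * x₂) := by
  have hcos₁ : cos (2 * π * x₁) = 2 * cos (π * x₁) ^ 2 - 1 := by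
    rw [← cos_two_mul]; ring_nf
  have hcos₂ : cos (4 * π * x₂) = 2 * cos (2 * π * x₂) ^ 2 - 1 := by
    rw [← cos_two_mul]; ring_nf
  rw [heteroDensity_eq, hcos₁, hcos₂, sin_sq, sin_sq]
  ring

theorem heteroDensity_one_sub (θ x₁ x₂ : ℝ) :
    heteroDensity θ x₁ (1 - x₂) = heteroDensity θ x₁ x₂ := by
  have hreflect : 2 * π * (1 - x₂) = 2 * π - 2 * π * x₂ := by ring
  simp only [heteroDensity_eq, hreflect, cos_two_pi_sub, sin_two_pi_sub, neg_sq]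

theorem continuous_heteroDensity (θ x₁ : ℝ) : Continuous (heteroDensity θ x₁) := by
  simp only [funext (heteroDensity_eq θ x₁)]
  fun_prop

theorem integral_heteroDensity (θ x₁ : ℝ) :
    ∫ x₂ in (0 : ℝ)..1, heteroDensity θ x₁ x₂ = 1 + 2 * θ ^ 2 * cos (2 * π * x₁) := by
  have hsin : sin (4 * π) = 0 := by simpa using sin_nat_mul_pi 4
  simp only [heteroDensity_eq_fourier]
  rw [integral_add, integral_add, integral_const_mul, integral_const_mul]
  · simp [hsin]
  all_goals exact Continuous.intervalIntegrable (by fun_prop) 0 1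

theorem integral_mul_heteroDensity (θ x₁ : ℝ) :
    ∫ x₂ in (0 : ℝ)..1, x₂ * heteroDensity θ x₁ x₂ =
      1 / 2 * ∫ x₂ in (0 : ℝ)..1, heteroDensity θ x₁ x₂ := by
  simpa using integral_mul_eq_midpoint_mul_integral
    ((continuous_heteroDensity θ x₁).intervalIntegrable 0 1)
    (fun x₂ => by simpa using heteroDensity_one_sub θ x₁ x₂)

theorem sgm_heteroscedastic_conditional_mean_general (θ : ℝ) (x₁ : ℝ) :
    (∫ x₂ in (0 : ℝ)..1, x₂ * heteroDensity θ x₁ x₂)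
        = (1 / 2) * ∫ x₂ in (0 : ℝ)..1, heteroDensity θ x₁ x₂ ∧
      (∫ x₂ in (0 : ℝ)..1, heteroDensity θ x₁ x₂)
        = 1 + 2 * θ ^ 2 * Real.cos (2 * Real.pi * x₁) :=
  ⟨integral_mul_heteroDensity θ x₁, integral_heteroDensity θ x₁⟩

/-- The conditional mean of X₂ given X₁ = x₁ is exactly 1/2:
∫₀¹ x₂ p(x₁,x₂|θ) dx₂ = (1/2) ∫₀¹ p(x₁,x₂|θ) dx₂ = (1/2)(1 + 2θ²cos(2πx₁)). -/
theorem sgm_heteroscedastic_conditional_mean (θ : ℝ) (x₁ : ℝ)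
    (hx₁ : x₁ ∈ Set.Icc (0 : ℝ) 1) :
    (∫ x₂ in (0 : ℝ)..1, x₂ * heteroDensity θ x₁ x₂)
        = (1 / 2) * ∫ x₂ in (0 : ℝ)..1, heteroDensity θ x₁ x₂ ∧
      (∫ x₂ in (0 : ℝ)..1, heteroDensity θ x₁ x₂)
        = 1 + 2 * θ ^ 2 * Real.cos (2 * Real.pi * x₁) :=
  sgm_heteroscedastic_conditional_mean_general θ x₁
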